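/- arXiv:1705.09539 — 5 statements merged into one kernel-verified Lean document; each statement's English description precedes it below -/
import Mathlib

section
/- Let A be a nonempty family of subsets of {x_1,...,x_n} forming the basis set of a set system, and let α = (k_1,...,k_n) be a vector of positive integers. Then A is the collection of bases of a matroid on {x_1,...,x_n} if and only if its expansion A^α is the collection of bases of a matroid on the expanded ground set {x_{ij} : 1 ≤ i ≤ n, 1 ≤ j ≤ k_i}. -/
open Finset

/-- A set family is the collection of bases of a matroid: nonempty antichain
satisfying the basis exchange property. -/
def IsMatroidBases {γ : Type*} [DecidableEq γ] (ℬ : Set (Finset γ)) : Prop :=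
  ℬ.Nonempty ∧
  (∀ B₁ ∈ ℬ, ∀ B₂ ∈ ℬ, B₁ ⊆ B₂ → B₁ = B₂) ∧
  (∀ B₁ ∈ ℬ, ∀ B₂ ∈ ℬ, ∀ x ∈ B₁ \ B₂, ∃ y ∈ B₂ \ B₁, insert y (B₁.erase x) ∈ ℬ)

/-- The expansion of a family of subsets of `Fin n` with respect to `α`:
a subset `S` of the expanded ground set `Σ i, Fin (α i)` belongs to the
expansion iff it contains at most one copy of each element and its projection
belongs to the family. -/
def expansion {n : ℕ} (α : Fin n → ℕ) (𝒜 : Set (Finset (Fin n))) :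
    Set (Finset (Σ i : Fin n, Fin (α i))) :=
  {S | S.image Sigma.fst ∈ 𝒜 ∧ S.card = (S.image Sigma.fst).card}

lemma image_erase_injOn {β γ : Type*} [DecidableEq β] [DecidableEq γ]
    {f : β → γ} {s : Finset β} (h : Set.InjOn f s) {a : β} (ha : a ∈ s) :
    (s.erase a).image f = (s.image f).erase (f a) := by
  ext c
  simp only [mem_image, mem_erase]
  constructor
  · rintro ⟨b, ⟨hb1, hb2⟩, rfl⟩
    exact ⟨fun heq => hb1 (h hb2 ha heq), b, hb2, rfl⟩
  · rintro ⟨hc, b, hb, rfl⟩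
    exact ⟨b, ⟨fun h' => hc (by rw [h']), hb⟩, rfl⟩

lemma exp_injOn {n : ℕ} {α : Fin n → ℕ} {𝒜 : Set (Finset (Fin n))}
    {S : Finset (Σ i : Fin n, Fin (α i))} (hS : S ∈ expansion α 𝒜) :
    Set.InjOn Sigma.fst (S : Set (Σ i : Fin n, Fin (α i))) :=
  Finset.card_image_iff.mp hS.2.symm

/-- a nonempty family is the basis family of a matroid iff its
expansion (with respect to a vector of positive integers) is. -/
theorem stmt_0 {n : ℕ} (α : Fin n → ℕ) (hα : ∀ i, 0 < α i)
    (𝒜 : Set (Finset (Fin n))) (h𝒜 : 𝒜.Nonempty) :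
    IsMatroidBases 𝒜 ↔ IsMatroidBases (expansion α 𝒜) := by
  set f : Fin n → Σ i : Fin n, Fin (α i) := fun i => ⟨i, ⟨0, hα i⟩⟩ with hf
  have hfinj : Function.Injective f := fun i j h => congrArg Sigma.fst h
  have hfim : ∀ A : Finset (Fin n), (A.image f).image Sigma.fst = A := by
    intro A
    rw [Finset.image_image]
    exact Finset.image_id
  have hlift : ∀ A : Finset (Fin n), A ∈ 𝒜 → A.image f ∈ expansion α 𝒜 := by
    intro A hA
    refine ⟨by rwa [hfim], ?_⟩
    rw [hfim, Finset.card_image_of_injective _ hfinj]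
  constructor
  · rintro ⟨hne, hanti, hexch⟩
    refine ⟨?_, ?_, ?_⟩
    · obtain ⟨A, hA⟩ := hne
      exact ⟨A.image f, hlift A hA⟩
    · intro S₁ hS₁ S₂ hS₂ hsub
      have him : S₁.image Sigma.fst = S₂.image Sigma.fst :=
        hanti _ hS₁.1 _ hS₂.1 (Finset.image_subset_image hsub)
      apply Finset.eq_of_subset_of_card_le hsub
      rw [hS₁.2, hS₂.2, him]
    · intro S₁ hS₁ S₂ hS₂ x hx
      rw [Finset.mem_sdiff] at hx
      obtain ⟨hx1, hx2⟩ := hx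
      have inj₁ := exp_injOn hS₁
      have hxA₁ : x.1 ∈ S₁.image Sigma.fst := Finset.mem_image_of_mem _ hx1
      by_cases hi : x.1 ∈ S₂.image Sigma.fst
      · -- replace x by another copy of the same element
        obtain ⟨y, hy2, hyfst⟩ := Finset.mem_image.mp hi
        have hyS1 : y ∉ S₁ := by
          intro hy1
          exact hx2 (inj₁ hy1 hx1 hyfst ▸ hy2)
        have hyer : y ∉ S₁.erase x := fun h => hyS1 (Finset.mem_of_mem_erase h)
        refine ⟨y, Finset.mem_sdiff.mpr ⟨hy2, hyS1⟩, ?_, ?_⟩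
        · rw [Finset.image_insert, image_erase_injOn inj₁ hx1, hyfst,
            Finset.insert_erase hxA₁]
          exact hS₁.1
        · rw [Finset.image_insert, image_erase_injOn inj₁ hx1, hyfst,
            Finset.insert_erase hxA₁, Finset.card_insert_of_notMem hyer,
            Finset.card_erase_of_mem hx1, ← hS₁.2]
          have : 0 < S₁.card := Finset.card_pos.mpr ⟨x, hx1⟩
          omega
      · -- use exchange in 𝒜
        have hxd : x.1 ∈ S₁.image Sigma.fst \ S₂.image Sigma.fst :=
          Finset.mem_sdiff.mpr ⟨hxA₁, hi⟩
        obtain ⟨i', hi', hB⟩ := hexch _ hS₁.1 _ hS₂.1 x.1 hxd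
        rw [Finset.mem_sdiff] at hi'
        obtain ⟨y, hy2, hyfst⟩ := Finset.mem_image.mp hi'.1
        have hyS1 : y ∉ S₁ := fun hy1 =>
          hi'.2 (hyfst ▸ Finset.mem_image_of_mem Sigma.fst hy1)
        have hyer : y ∉ S₁.erase x := fun h => hyS1 (Finset.mem_of_mem_erase h)
        have hi'er : i' ∉ (S₁.image Sigma.fst).erase x.1 := fun h =>
          hi'.2 (Finset.mem_of_mem_erase h)
        refine ⟨y, Finset.mem_sdiff.mpr ⟨hy2, hyS1⟩, ?_, ?_⟩
        · rw [Finset.image_insert, image_erase_injOn inj₁ hx1, hyfst]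
          exact hB
        · rw [Finset.image_insert, image_erase_injOn inj₁ hx1, hyfst,
            Finset.card_insert_of_notMem hyer,
            Finset.card_insert_of_notMem hi'er,
            Finset.card_erase_of_mem hx1, Finset.card_erase_of_mem hxA₁,
            ← hS₁.2]
  · rintro ⟨-, hanti, hexch⟩
    refine ⟨h𝒜, ?_, ?_⟩
    · intro A₁ hA₁ A₂ hA₂ hsub
      have h1 := hanti _ (hlift A₁ hA₁) _ (hlift A₂ hA₂)
        (Finset.image_subset_image hsub)
      have h2 := congrArg (Finset.image Sigma.fst) h1
      rwa [hfim, hfim] at h2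
    · intro A₁ hA₁ A₂ hA₂ i hi
      rw [Finset.mem_sdiff] at hi
      have hx1 : f i ∈ A₁.image f := Finset.mem_image_of_mem _ hi.1
      have hx2 : f i ∉ A₂.image f := by
        intro h
        obtain ⟨a, ha, hfa⟩ := Finset.mem_image.mp h
        exact hi.2 (hfinj hfa ▸ ha)
      obtain ⟨y, hy, hT⟩ := hexch _ (hlift A₁ hA₁) _ (hlift A₂ hA₂) (f i)
        (Finset.mem_sdiff.mpr ⟨hx1, hx2⟩)
      rw [Finset.mem_sdiff] at hy
      obtain ⟨i', hi'2, rfl⟩ := Finset.mem_image.mp hy.1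
      have hi'A₁ : i' ∉ A₁ := fun h => hy.2 (Finset.mem_image_of_mem _ h)
      refine ⟨i', Finset.mem_sdiff.mpr ⟨hi'2, hi'A₁⟩, ?_⟩
      have him := hT.1
      rw [Finset.image_insert, ← Finset.image_erase hfinj,
        hfim (A₁.erase i)] at him
      exact him
end

section
/- Let M be a matroid on {x_1,...,x_n} and α = (k_1,...,k_n) ∈ ℕ^n with positive entries. Then M is a binary matroid if and only if M^α is a binary matroid, where a matroid is binary if for every pair of distinct circuits C_1, C_2, the symmetric difference C_1 △ C_2 contains a circuit. -/
open Finset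

/-- A set is dependent if it is contained in no basis. -/
def IsDependent {γ : Type*} [DecidableEq γ] (ℬ : Set (Finset γ)) (C : Finset γ) : Prop :=
  ¬ ∃ B ∈ ℬ, C ⊆ B

/-- A circuit is a minimal dependent set. -/
def IsCircuit {γ : Type*} [DecidableEq γ] (ℬ : Set (Finset γ)) (C : Finset γ) : Prop :=
  IsDependent ℬ C ∧ ∀ D ⊂ C, ¬ IsDependent ℬ D

/-- A matroid (given by its bases) is binary if the symmetric difference of any
two distinct circuits contains a circuit. -/
def IsBinary {γ : Type*} [DecidableEq γ] (ℬ : Set (Finset γ)) : Prop :=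
  ∀ C₁ C₂ : Finset γ, IsCircuit ℬ C₁ → IsCircuit ℬ C₂ → C₁ ≠ C₂ →
    ∃ C : Finset γ, IsCircuit ℬ C ∧ C ⊆ (C₁ \ C₂) ∪ (C₂ \ C₁)

/-!
A set is dependent in `M^α` iff it contains two copies of one element or its projection is
dependent in `M`, so the circuits of `M^α` are the parallel pairs and the injective lifts of
circuits of `M`, and binarity amounts to the symmetric difference of two distinct circuits being
dependent. For two lifts `C₁, C₂`, the projection of `C₁ ∆ C₂` contains the symmetric difference
of the projections, unless these coincide, in which case `C₁ ∆ C₂` contains two copies of one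
element. For a parallel pair `{z, w}` with `z ∈ C`, `w ∉ C`, the set `{z, w} ∆ C` contains the
image of `C` under the automorphism of `M^α` swapping `z` and `w`. Conversely, a section of the
projection lifts circuits of `M` to circuits of `M^α` and carries binarity back to `M`.
-/

open scoped symmDiff

section Dependence
variable {γ : Type*} [DecidableEq γ] {ℬ : Set (Finset γ)} {S T C₁ C₂ : Finset γ}

theorem IsDependent.mono (hS : IsDependent ℬ S) (hST : S ⊆ T) : IsDependent ℬ T :=
  fun ⟨B, hB, hTB⟩ => hS ⟨B, hB, hST.trans hTB⟩

theorem IsDependent.exists_isCircuit_subset (hS : IsDependent ℬ S) :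
    ∃ C ⊆ S, IsCircuit ℬ C := by
  induction S using Finset.strongInduction with
  | _ S ih =>
    by_cases h : ∃ D ⊂ S, IsDependent ℬ D
    · obtain ⟨D, hDS, hD⟩ := h
      obtain ⟨C, hCD, hC⟩ := ih D hDS hD
      exact ⟨C, hCD.trans hDS.subset, hC⟩
    · exact ⟨S, subset_rfl, hS, fun D hD hdep => h ⟨D, hD, hdep⟩⟩

theorem IsCircuit.eq_of_subset (h₁ : IsCircuit ℬ C₁) (h₂ : IsCircuit ℬ C₂) (hsub : C₁ ⊆ C₂) :
    C₁ = C₂ := by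
  by_contra hne
  exact h₂.2 C₁ (hsub.ssubset_of_ne hne) h₁.1

theorem isBinary_iff_isDependent_symmDiff :
    IsBinary ℬ ↔ ∀ C₁ C₂, IsCircuit ℬ C₁ → IsCircuit ℬ C₂ → C₁ ≠ C₂ → IsDependent ℬ (C₁ ∆ C₂) := by
  refine forall₄_congr fun C₁ C₂ _ _ => imp_congr_right fun _ => ⟨?_, ?_⟩
  · rintro ⟨C, hC, hsub⟩
    exact hC.1.mono hsub
  · intro h
    obtain ⟨C, hsub, hC⟩ := h.exists_isCircuit_subset
    exact ⟨C, hC, hsub⟩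

end Dependence

theorem Finset.symmDiff_image_subset_image_symmDiff {α β : Type*} [DecidableEq α] [DecidableEq β]
    (f : α → β) (s t : Finset α) : s.image f ∆ t.image f ⊆ (s ∆ t).image f := by
  intro b hb
  simp only [mem_symmDiff, mem_image] at hb ⊢
  rcases hb with ⟨⟨a, ha, rfl⟩, hat⟩ | ⟨⟨a, ha, rfl⟩, has⟩
  · exact ⟨a, .inl ⟨ha, fun h => hat ⟨a, h, rfl⟩⟩, rfl⟩
  · exact ⟨a, .inr ⟨ha, fun h => has ⟨a, h, rfl⟩⟩, rfl⟩

theorem Finset.not_injOn_symmDiff_of_image_eq {α β : Type*} [DecidableEq α] [DecidableEq β]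
    {f : α → β} {s t : Finset α} (hs : Set.InjOn f s) (himage : s.image f = t.image f)
    (hst : ¬ s ⊆ t) : ¬ Set.InjOn f ↑(s ∆ t) := by
  obtain ⟨a, has, hat⟩ := Finset.not_subset.mp hst
  obtain ⟨b, hbt, hba⟩ := Finset.mem_image.mp (himage ▸ Finset.mem_image_of_mem f has)
  have hbs : b ∉ s := fun hbs => hat (hs hbs has hba ▸ hbt)
  intro hinj
  have hab := hinj (mem_coe.2 (mem_symmDiff.2 (.inr ⟨hbt, hbs⟩)))
    (mem_coe.2 (mem_symmDiff.2 (.inl ⟨has, hat⟩))) hba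
  exact hat (hab ▸ hbt)

section Expansion
variable {n : ℕ} {α : Fin n → ℕ} {𝒜 : Set (Finset (Fin n))} {S C : Finset (Σ i, Fin (α i))}

theorem isDependent_expansion_of_not_injOn (h : ¬ Set.InjOn Sigma.fst (S : Set (Σ i, Fin (α i)))) :
    IsDependent (expansion α 𝒜) S := by
  rintro ⟨B, hB, hSB⟩
  exact h ((Finset.card_image_iff.mp hB.2.symm).mono hSB)

theorem isDependent_expansion_of_isDependent_image (h : IsDependent 𝒜 (S.image Sigma.fst)) :
    IsDependent (expansion α 𝒜) S := by
  rintro ⟨B, hB, hSB⟩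
  exact h ⟨B.image Sigma.fst, hB.1, Finset.image_subset_image hSB⟩

/-- An injective lift of an independent set of `𝒜` extends to a basis of the expansion by
adding one copy of each missing element of a basis. -/
theorem isDependent_expansion_iff (hα : ∀ i, 0 < α i) :
    IsDependent (expansion α 𝒜) S ↔
      ¬ Set.InjOn Sigma.fst (S : Set (Σ i, Fin (α i))) ∨ IsDependent 𝒜 (S.image Sigma.fst) := by
  refine ⟨fun h => ?_, fun h => h.elim isDependent_expansion_of_not_injOn
    isDependent_expansion_of_isDependent_image⟩
  rw [or_iff_not_imp_left, not_not]
  rintro hinj ⟨B, hB, hSB⟩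
  set T := (B \ S.image Sigma.fst).image fun i => (⟨i, ⟨0, hα i⟩⟩ : Σ i, Fin (α i))
  have hT : T.image Sigma.fst = B \ S.image Sigma.fst := by
    rw [Finset.image_image]
    exact Finset.image_id
  have himage : (S ∪ T).image Sigma.fst = B := by
    rw [Finset.image_union, hT, Finset.union_sdiff_of_subset hSB]
  have hcard : (S ∪ T).card ≤ ((S ∪ T).image Sigma.fst).card := calc
    (S ∪ T).card ≤ S.card + T.card := Finset.card_union_le S T
    _ ≤ (S.image Sigma.fst).card + (B \ S.image Sigma.fst).card := by
      rw [Finset.card_image_of_injOn hinj]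
      exact Nat.add_le_add_left Finset.card_image_le _
    _ = ((S ∪ T).image Sigma.fst).card := by
      rw [himage, add_comm, Finset.card_sdiff_add_card_eq_card hSB]
  refine h ⟨S ∪ T, ⟨himage ▸ hB, ?_⟩, Finset.subset_union_left⟩
  exact le_antisymm hcard Finset.card_image_le

theorem map_mem_expansion {σ : (Σ i, Fin (α i)) ≃ (Σ i, Fin (α i))} (hσ : ∀ x, (σ x).1 = x.1)
    {B : Finset (Σ i, Fin (α i))} (hB : B ∈ expansion α 𝒜) :
    B.map σ.toEmbedding ∈ expansion α 𝒜 := by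
  have himage : (B.map σ.toEmbedding).image Sigma.fst = B.image Sigma.fst := by
    rw [Finset.map_eq_image, Finset.image_image]
    exact Finset.image_congr fun x _ => hσ x
  exact ⟨himage ▸ hB.1, by rw [himage, Finset.card_map]; exact hB.2⟩

theorem IsDependent.map_expansion {σ : (Σ i, Fin (α i)) ≃ (Σ i, Fin (α i))}
    (hσ : ∀ x, (σ x).1 = x.1) (hS : IsDependent (expansion α 𝒜) S) :
    IsDependent (expansion α 𝒜) (S.map σ.toEmbedding) := by
  rintro ⟨B, hB, hSB⟩
  refine hS ⟨B.map σ.symm.toEmbedding, map_mem_expansion (fun x => ?_) hB, ?_⟩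
  · simpa using (hσ (σ.symm x)).symm
  · exact fun x hx => Finset.mem_map_equiv.2 (hSB (Finset.mem_map_of_mem σ.toEmbedding hx))

theorem isDependent_expansion_pair {z w : Σ i, Fin (α i)} (hzw : z ≠ w) (hfst : z.1 = w.1) :
    IsDependent (expansion α 𝒜) {z, w} :=
  isDependent_expansion_of_not_injOn fun hinj => hzw (hinj (by simp) (by simp) hfst)

/-- Swapping the parallel elements `z` and `w` is an automorphism of the expansion, and it
carries `C` into `{z, w} ∆ C`. -/
theorem isDependent_expansion_pair_symmDiff_of_mem_of_notMem {z w : Σ i, Fin (α i)}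
    (hfst : z.1 = w.1) (hC : IsDependent (expansion α 𝒜) C) (hz : z ∈ C) (hw : w ∉ C) :
    IsDependent (expansion α 𝒜) ({z, w} ∆ C) := by
  refine (hC.map_expansion (σ := Equiv.swap z w) fun x => ?_).mono ?_
  · rcases eq_or_ne x z with rfl | hxz
    · simp [hfst]
    rcases eq_or_ne x w with rfl | hxw
    · simp [hfst]
    · rw [Equiv.swap_apply_of_ne_of_ne hxz hxw]
  · intro y hy
    obtain ⟨x, hx, rfl⟩ := Finset.mem_map.mp hy
    rcases eq_or_ne x z with rfl | hxz
    · simp [Finset.mem_symmDiff, hw]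
    have hxw : x ≠ w := fun h => hw (h ▸ hx)
    simp [Equiv.swap_apply_of_ne_of_ne hxz hxw, Finset.mem_symmDiff, hx, hxz, hxw]

theorem isDependent_expansion_pair_symmDiff {z w : Σ i, Fin (α i)} (hzw : z ≠ w)
    (hfst : z.1 = w.1) (hC : IsDependent (expansion α 𝒜) C) (hsub : ¬ {z, w} ⊆ C) :
    IsDependent (expansion α 𝒜) ({z, w} ∆ C) := by
  by_cases hz : z ∈ C <;> by_cases hw : w ∈ C
  · exact absurd (Finset.insert_subset hz (Finset.singleton_subset_iff.2 hw)) hsub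
  · exact isDependent_expansion_pair_symmDiff_of_mem_of_notMem hfst hC hz hw
  · rw [Finset.pair_comm]
    exact isDependent_expansion_pair_symmDiff_of_mem_of_notMem hfst.symm hC hw hz
  · refine (isDependent_expansion_pair hzw hfst).mono fun x hx => ?_
    have hxC : x ∉ C := by rcases Finset.mem_insert.mp hx with rfl | hx <;> simp_all
    exact Finset.mem_symmDiff.2 (.inl ⟨hx, hxC⟩)

theorem IsCircuit.eq_pair_of_not_injOn (h : IsCircuit (expansion α 𝒜) C)
    (hinj : ¬ Set.InjOn Sigma.fst (C : Set (Σ i, Fin (α i)))) :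
    ∃ z w : Σ i, Fin (α i), z ≠ w ∧ z.1 = w.1 ∧ C = {z, w} := by
  simp only [Set.InjOn, not_forall] at hinj
  obtain ⟨z, hz, w, hw, hfst, hzw⟩ := hinj
  have hpair : {z, w} ⊆ C := Finset.insert_subset hz (Finset.singleton_subset_iff.2 hw)
  refine ⟨z, w, hzw, hfst, ?_⟩
  by_contra hne
  exact h.2 _ (hpair.ssubset_of_ne (Ne.symm hne)) (isDependent_expansion_pair hzw hfst)

theorem IsCircuit.isCircuit_image_fst (hα : ∀ i, 0 < α i) (h : IsCircuit (expansion α 𝒜) C)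
    (hinj : Set.InjOn Sigma.fst (C : Set (Σ i, Fin (α i)))) :
    IsCircuit 𝒜 (C.image Sigma.fst) := by
  refine ⟨((isDependent_expansion_iff hα).mp h.1).resolve_left (not_not.2 hinj), ?_⟩
  intro D hD hdep
  obtain ⟨C', hC'C, rfl⟩ := Finset.subset_image_iff.mp hD.subset
  have hC' : C' ⊂ C := hC'C.ssubset_of_ne (by rintro rfl; exact hD.ne rfl)
  exact h.2 C' hC' (isDependent_expansion_of_isDependent_image hdep)

theorem isDependent_expansion_symmDiff_of_injOn {C₁ C₂ : Finset (Σ i, Fin (α i))}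
    (hinj : Set.InjOn Sigma.fst (C₁ : Set (Σ i, Fin (α i)))) (hsub : ¬ C₁ ⊆ C₂)
    (hbin : C₁.image Sigma.fst ≠ C₂.image Sigma.fst →
      IsDependent 𝒜 (C₁.image Sigma.fst ∆ C₂.image Sigma.fst)) :
    IsDependent (expansion α 𝒜) (C₁ ∆ C₂) := by
  by_cases himage : C₁.image Sigma.fst = C₂.image Sigma.fst
  · exact isDependent_expansion_of_not_injOn
      (Finset.not_injOn_symmDiff_of_image_eq hinj himage hsub)
  · exact isDependent_expansion_of_isDependent_image
      ((hbin himage).mono (Finset.symmDiff_image_subset_image_symmDiff _ _ _))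

theorem isBinary_expansion (hα : ∀ i, 0 < α i) (h : IsBinary 𝒜) :
    IsBinary (expansion α 𝒜) := by
  rw [isBinary_iff_isDependent_symmDiff] at h ⊢
  intro C₁ C₂ h₁ h₂ hne
  have hsub₁₂ : ¬ C₁ ⊆ C₂ := fun hs => hne (h₁.eq_of_subset h₂ hs)
  have hsub₂₁ : ¬ C₂ ⊆ C₁ := fun hs => hne (h₂.eq_of_subset h₁ hs).symm
  by_cases hinj₁ : Set.InjOn Sigma.fst (C₁ : Set (Σ i, Fin (α i)))
  swap
  · obtain ⟨z, w, hzw, hfst, rfl⟩ := h₁.eq_pair_of_not_injOn hinj₁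
    exact isDependent_expansion_pair_symmDiff hzw hfst h₂.1 hsub₁₂
  by_cases hinj₂ : Set.InjOn Sigma.fst (C₂ : Set (Σ i, Fin (α i)))
  swap
  · obtain ⟨z, w, hzw, hfst, rfl⟩ := h₂.eq_pair_of_not_injOn hinj₂
    rw [symmDiff_comm]
    exact isDependent_expansion_pair_symmDiff hzw hfst h₁.1 hsub₂₁
  exact isDependent_expansion_symmDiff_of_injOn hinj₁ hsub₁₂
    (h _ _ (h₁.isCircuit_image_fst hα hinj₁) (h₂.isCircuit_image_fst hα hinj₂))

theorem isDependent_expansion_image_section_iff (hα : ∀ i, 0 < α i)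
    {s : Fin n → Σ i, Fin (α i)} (hs : ∀ i, (s i).1 = i) {D : Finset (Fin n)} :
    IsDependent (expansion α 𝒜) (D.image s) ↔ IsDependent 𝒜 D := by
  have himage : (D.image s).image Sigma.fst = D := by
    rw [Finset.image_image]
    exact (Finset.image_congr fun i _ => hs i).trans Finset.image_id
  have hinj : Set.InjOn Sigma.fst (D.image s : Set (Σ i, Fin (α i))) := by
    rw [Finset.coe_image]
    rintro _ ⟨i, -, rfl⟩ _ ⟨j, -, rfl⟩ hij
    rw [hs, hs] at hij
    rw [hij]
  rw [isDependent_expansion_iff hα, himage, or_iff_right (not_not.2 hinj)]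

theorem IsCircuit.image_section (hα : ∀ i, 0 < α i) {s : Fin n → Σ i, Fin (α i)}
    (hs : ∀ i, (s i).1 = i) {D : Finset (Fin n)} (h : IsCircuit 𝒜 D) :
    IsCircuit (expansion α 𝒜) (D.image s) := by
  refine ⟨(isDependent_expansion_image_section_iff hα hs).2 h.1, fun C hC hdep => ?_⟩
  obtain ⟨D', hD'D, rfl⟩ := Finset.subset_image_iff.mp hC.subset
  have hD' : D' ⊂ D := hD'D.ssubset_of_ne (by rintro rfl; exact hC.ne rfl)
  exact h.2 D' hD' ((isDependent_expansion_image_section_iff hα hs).1 hdep)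

theorem isBinary_of_isBinary_expansion (hα : ∀ i, 0 < α i) (h : IsBinary (expansion α 𝒜)) :
    IsBinary 𝒜 := by
  rw [isBinary_iff_isDependent_symmDiff] at h ⊢
  intro D₁ D₂ h₁ h₂ hne
  let s : Fin n → Σ i, Fin (α i) := fun i => ⟨i, 0, hα i⟩
  have hs : ∀ i, (s i).1 = i := fun _ => rfl
  have hs_inj : Function.Injective s := Function.LeftInverse.injective hs
  rw [← isDependent_expansion_image_section_iff hα hs, Finset.image_symmDiff _ _ hs_inj]
  exact h _ _ (h₁.image_section hα hs) (h₂.image_section hα hs)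
    ((Finset.image_injective hs_inj).ne hne)

end Expansion

theorem stmt_2_general {n : ℕ} (α : Fin n → ℕ) (hα : ∀ i, 0 < α i)
    (𝒜 : Set (Finset (Fin n))) :
    IsBinary 𝒜 ↔ IsBinary (expansion α 𝒜) :=
  ⟨isBinary_expansion hα, isBinary_of_isBinary_expansion hα⟩

/-- `M` is binary iff its expansion `M^α` is binary. -/
theorem stmt_2 {n : ℕ} (α : Fin n → ℕ) (hα : ∀ i, 0 < α i)
    (𝒜 : Set (Finset (Fin n))) (hM : IsMatroidBases 𝒜) :
    IsBinary 𝒜 ↔ IsBinary (expansion α 𝒜) :=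
  stmt_2_general α hα 𝒜
end

section
/- If 𝒜 is a family of subsets of {x_1,...,x_n}, \overline{𝒜} its contraction with equivalence classes y_1,...,y_m of sizes a_1,...,a_m and α = (a_1,...,a_m), then the expansion (\overline{𝒜})^α coincides with the family of maximal elements of 𝒜 up to a relabeling of the ground set. -/
/-!
If `x` and `y` have the same link in a family `ℬ` of sets and `x ∈ A ∈ ℬ`, then exchanging `x`
for `y` in `A` stays inside `ℬ`. When `ℬ` is an antichain (such as the maximal members of `𝒜`),
no two link-equivalent elements lie in a common member, since otherwise the exchange would
produce the proper subset `A \ {x}` of `A`. Conversely, a set meeting each class at most once and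
with the same classes as a member `A` is reached from `A` by finitely many such exchanges. So the
members of `ℬ` are exactly the transversals of the class-sets `\overline{A}`, which is what the
expansion of the contraction consists of.
-/

open Finset

/-- The deletion-link of an element `x` in a family `ℬ`: the collection of sets
obtained by removing `x` from the members of `ℬ` containing it. -/
def link {γ : Type*} [DecidableEq γ] (ℬ : Set (Finset γ)) (x : γ) : Set (Finset γ) :=
  {C | ∃ A ∈ ℬ, x ∈ A ∧ C = A.erase x}

/-- The maximal (with respect to inclusion) members of a family of finite sets. -/
def maximalMembers {γ : Type*} (𝒜 : Set (Finset γ)) : Set (Finset γ) :=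
  {A ∈ 𝒜 | ∀ A' ∈ 𝒜, A ⊆ A' → A = A'}

section Link

variable {γ : Type*} [DecidableEq γ] {ℬ : Set (Finset γ)}

theorem insert_erase_mem_of_link_eq {A : Finset γ} {x y : γ} (hA : A ∈ ℬ) (hx : x ∈ A)
    (h : link ℬ x = link ℬ y) : insert y (A.erase x) ∈ ℬ := by
  obtain ⟨B, hB, hyB, hBA⟩ : A.erase x ∈ link ℬ y := h ▸ ⟨A, hA, hx, rfl⟩
  rwa [hBA, insert_erase hyB]

theorem eq_of_link_eq_of_mem (hℬ : IsAntichain (· ⊆ ·) ℬ) {A : Finset γ} (hA : A ∈ ℬ)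
    {x y : γ} (hx : x ∈ A) (hy : y ∈ A) (h : link ℬ x = link ℬ y) : x = y := by
  by_contra hxy
  have hmem := insert_erase_mem_of_link_eq hA hx h
  rw [insert_eq_self.2 (mem_erase.2 ⟨Ne.symm hxy, hy⟩)] at hmem
  have hself : A.erase x = A := hℬ.eq hmem hA (erase_subset x A)
  exact notMem_erase x A (by rwa [hself])

variable {β : Type*} {q : γ → β}

theorem injOn_of_link_eq (hℬ : IsAntichain (· ⊆ ·) ℬ)
    (hq : ∀ x y, q x = q y → link ℬ x = link ℬ y) {A : Finset γ} (hA : A ∈ ℬ) :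
    Set.InjOn q A :=
  fun _ hx _ hy h => eq_of_link_eq_of_mem hℬ hA hx hy (hq _ _ h)

variable [DecidableEq β]

/- Induction on `#(A \ A')`: exchanging some `x ∈ A \ A'` for the `y ∈ A'` with `q y = q x`
keeps the image under `q` and shrinks the difference. -/
theorem mem_of_injOn_of_image_eq (hq : ∀ x y, q x = q y → link ℬ x = link ℬ y)
    {A A' : Finset γ} (hA : A ∈ ℬ) (hA' : Set.InjOn q A') (himg : A'.image q = A.image q) :
    A' ∈ ℬ := by
  by_cases hsub : A ⊆ A'
  · suffices A' ⊆ A from (subset_antisymm hsub this) ▸ hA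
    intro z hz
    obtain ⟨w, hw, hwz⟩ := mem_image.1 (himg ▸ mem_image_of_mem q hz)
    exact hA' (hsub hw) hz hwz ▸ hw
  · obtain ⟨x, hxA, hxA'⟩ := not_subset.1 hsub
    obtain ⟨y, hyA', hyx⟩ := mem_image.1 (himg ▸ mem_image_of_mem q hxA)
    have hexch : insert y (A.erase x) ∈ ℬ :=
      insert_erase_mem_of_link_eq hA hxA (hq x y hyx.symm)
    have hdiff : insert y (A.erase x) \ A' = (A \ A').erase x := by
      rw [insert_sdiff_of_mem _ hyA', erase_sdiff_comm]
    have : #(insert y (A.erase x) \ A') < #(A \ A') := by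
      rw [hdiff]
      exact card_erase_lt_of_mem (mem_sdiff.2 ⟨hxA, hxA'⟩)
    refine mem_of_injOn_of_image_eq hq hexch hA' ?_
    rw [himg, image_insert, hyx, ← image_insert, insert_erase hxA]
termination_by #(A \ A')

theorem mem_iff_injOn_and_image_mem (hℬ : IsAntichain (· ⊆ ·) ℬ)
    (hq : ∀ x y, q x = q y → link ℬ x = link ℬ y) {A' : Finset γ} :
    A' ∈ ℬ ↔ A'.image q ∈ (fun A : Finset γ => A.image q) '' ℬ ∧ Set.InjOn q A' :=
  ⟨fun hA' => ⟨⟨A', hA', rfl⟩, injOn_of_link_eq hℬ hq hA'⟩,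
    fun ⟨⟨_, hA, himg⟩, hinj⟩ => mem_of_injOn_of_image_eq hq hA hinj himg.symm⟩

end Link

section Expansion

variable {γ : Type*} {m : ℕ} {α : Fin m → ℕ} {q : γ → Fin m}
  (e : γ ≃ Σ i, Fin (α i))

theorem image_mem_expansion_iff (he : ∀ x, (e x).1 = q x) (𝒞 : Set (Finset (Fin m)))
    (A : Finset γ) : A.image e ∈ expansion α 𝒞 ↔ A.image q ∈ 𝒞 ∧ Set.InjOn q A := by
  have hfst : (A.image e).image Sigma.fst = A.image q := by
    rw [image_image]
    exact image_congr fun x _ => he x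
  rw [expansion, Set.mem_ofPred_eq, hfst, card_image_of_injective A e.injective, eq_comm,
    card_image_iff]

theorem image_eq_expansion [DecidableEq γ] {ℬ : Set (Finset γ)} (hℬ : IsAntichain (· ⊆ ·) ℬ)
    (hq : ∀ x y, q x = q y → link ℬ x = link ℬ y) (he : ∀ x, (e x).1 = q x) :
    (fun A : Finset γ => A.image e) '' ℬ = expansion α ((fun A : Finset γ => A.image q) '' ℬ) := by
  ext S
  obtain ⟨A, rfl⟩ : ∃ A : Finset γ, A.image e = S := ⟨S.image e.symm, by simp [image_image]⟩
  rw [image_mem_expansion_iff e he, ← mem_iff_injOn_and_image_mem hℬ hq]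
  exact (image_injective e.injective).mem_set_image

end Expansion

theorem exists_surjective_fin_ker_eq {γ β : Type*} [Fintype γ] (f : γ → β) :
    ∃ (m : ℕ) (q : γ → Fin m), Function.Surjective q ∧ ∀ x y, q x = q y ↔ f x = f y := by
  classical
  let φ := Fintype.equivFin (Quotient (Setoid.ker f))
  exact ⟨_, fun x => φ ⟦x⟧, φ.surjective.comp Quotient.mk_surjective,
    fun x y => φ.injective.eq_iff.trans Quotient.eq⟩

noncomputable def fiberSigmaEquiv {γ : Type*} [Fintype γ] {m : ℕ} (q : γ → Fin m) :
    γ ≃ Σ i : Fin m, Fin (Finset.univ.filter (fun x => q x = i)).card :=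
  (Equiv.sigmaFiberEquiv q).symm.trans
    (Equiv.sigmaCongrRight fun _ => Fintype.equivFinOfCardEq (Fintype.card_subtype _))

theorem fiberSigmaEquiv_fst {γ : Type*} [Fintype γ] {m : ℕ} (q : γ → Fin m) (x : γ) :
    (fiberSigmaEquiv q x).1 = q x :=
  rfl

theorem maximalMembers_isAntichain {γ : Type*} (𝒜 : Set (Finset γ)) :
    IsAntichain (· ⊆ ·) (maximalMembers 𝒜) :=
  fun _ hA _ hA' hne hsub => hne (hA.2 _ hA'.1 hsub)

/-- the expansion of the contraction of `𝒜` (with respect to the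
sizes of the equivalence classes) coincides, up to a relabeling of the ground
set, with the family of maximal elements of `𝒜`. -/
theorem stmt_11 {n : ℕ} (𝒜 : Set (Finset (Fin n))) :
    ∃ (m : ℕ) (q : Fin n → Fin m), Function.Surjective q ∧
      (∀ x y : Fin n, q x = q y ↔ link (maximalMembers 𝒜) x = link (maximalMembers 𝒜) y) ∧
      ∃ e : Fin n ≃ (Σ i : Fin m, Fin ((Finset.univ.filter (fun x => q x = i)).card)),
        (∀ x, (e x).1 = q x) ∧
        (fun A : Finset (Fin n) => A.image e) '' (maximalMembers 𝒜)
          = expansion (fun i => (Finset.univ.filter (fun x => q x = i)).card)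
              ((fun A : Finset (Fin n) => A.image q) '' (maximalMembers 𝒜)) := by
  obtain ⟨m, q, hsurj, hq⟩ := exists_surjective_fin_ker_eq (link (maximalMembers 𝒜))
  refine ⟨m, q, hsurj, hq, fiberSigmaEquiv q, fiberSigmaEquiv_fst q, ?_⟩
  exact image_eq_expansion _ (maximalMembers_isAntichain 𝒜) (fun x y => (hq x y).1)
    (fiberSigmaEquiv_fst q)
end

section
/- Let M be a matroid (viewed as a family of bases) on {x_1,...,x_n} and α ∈ ℕ^n with positive entries. Then the contraction of the expansion M^α coincides with the contraction of M, i.e., \overline{M^α} = \overline{M} up to relabeling. Consequently \overline{M} is a matroid whenever M is. -/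
open Finset

section Aux

variable {γ : Type*} [DecidableEq γ]

lemma erase_mem_link {ℬ : Set (Finset γ)} {B : Finset γ} {x : γ}
    (hB : B ∈ ℬ) (hx : x ∈ B) : B.erase x ∈ link ℬ x :=
  ⟨B, hB, hx, rfl⟩

/-- Two distinct elements of the same member of a family cannot have equal links. -/
lemma eq_of_mem_of_link_eq {ℬ : Set (Finset γ)} {B : Finset γ} {x y : γ}
    (hB : B ∈ ℬ) (hx : x ∈ B) (hy : y ∈ B)
    (h : link ℬ x = link ℬ y) : x = y := by
  by_contra hne
  have h1 : B.erase x ∈ link ℬ y := h ▸ erase_mem_link hB hx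
  obtain ⟨A, hA, hyA, hEq⟩ := h1
  have hy' : y ∈ A.erase y := by
    rw [← hEq]
    exact Finset.mem_erase.mpr ⟨fun h' => hne h'.symm, hy⟩
  exact (Finset.notMem_erase y A) hy'

lemma image_erase_of_injOn {β : Type*} [DecidableEq β] {f : γ → β} {B : Finset γ}
    (hf : Set.InjOn f B) {x : γ} (hx : x ∈ B) :
    (B.erase x).image f = (B.image f).erase (f x) := by
  ext w
  simp only [Finset.mem_image, Finset.mem_erase]
  constructor
  · rintro ⟨z, ⟨hzx, hz⟩, rfl⟩
    exact ⟨fun h => hzx (hf hz hx h), z, hz, rfl⟩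
  · rintro ⟨hw, z, hz, rfl⟩
    exact ⟨z, ⟨fun h => hw (by rw [h]), hz⟩, rfl⟩

/-- All bases of a matroid have the same cardinality. -/
lemma card_eq_of_isMatroidBases {ℬ : Set (Finset γ)} (h : IsMatroidBases ℬ) :
    ∀ B₁ ∈ ℬ, ∀ B₂ ∈ ℬ, B₁.card = B₂.card := by
  obtain ⟨-, hanti, hexch⟩ := h
  have key : ∀ k : ℕ, ∀ B₁ ∈ ℬ, ∀ B₂ ∈ ℬ, (B₁ \ B₂).card ≤ k → B₁.card = B₂.card := by
    intro k
    induction k with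
    | zero =>
      intro B₁ hB₁ B₂ hB₂ h0
      have hsub : B₁ ⊆ B₂ := by
        rw [← Finset.sdiff_eq_empty_iff_subset]
        exact Finset.card_eq_zero.mp (Nat.le_zero.mp h0)
      rw [hanti B₁ hB₁ B₂ hB₂ hsub]
    | succ k ih =>
      intro B₁ hB₁ B₂ hB₂ hle
      by_cases hsub : B₁ ⊆ B₂
      · rw [hanti B₁ hB₁ B₂ hB₂ hsub]
      · obtain ⟨x, hx⟩ : (B₁ \ B₂).Nonempty := Finset.sdiff_nonempty.mpr hsub
        obtain ⟨y, hy, hB'⟩ := hexch B₁ hB₁ B₂ hB₂ x hx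
        have hxB₁ := (Finset.mem_sdiff.mp hx).1
        have hyB₂ := (Finset.mem_sdiff.mp hy).1
        have hyB₁ := (Finset.mem_sdiff.mp hy).2
        have hpos : 0 < B₁.card := Finset.card_pos.mpr ⟨x, hxB₁⟩
        have hcard : (insert y (B₁.erase x)).card = B₁.card := by
          rw [Finset.card_insert_of_notMem (fun h => hyB₁ (Finset.mem_of_mem_erase h)),
            Finset.card_erase_of_mem hxB₁]
          omega
        have hsd : (insert y (B₁.erase x)) \ B₂ ⊆ (B₁ \ B₂).erase x := by
          intro z hz
          rw [Finset.mem_sdiff, Finset.mem_insert, Finset.mem_erase] at hz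
          rw [Finset.mem_erase, Finset.mem_sdiff]
          rcases hz with ⟨hz1 | hz1, hz2⟩
          · exact absurd (hz1 ▸ hyB₂) hz2
          · exact ⟨hz1.1, hz1.2, hz2⟩
        have hlt : ((insert y (B₁.erase x)) \ B₂).card ≤ k := by
          have h1 := Finset.card_le_card hsd
          have h2 : ((B₁ \ B₂).erase x).card = (B₁ \ B₂).card - 1 :=
            Finset.card_erase_of_mem hx
          omega
        have := ih (insert y (B₁.erase x)) hB' B₂ hB₂ hlt
        omega
  intro B₁ hB₁ B₂ hB₂
  exact key (B₁ \ B₂).card B₁ hB₁ B₂ hB₂ le_rfl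

end Aux

section Expansion

variable {n : ℕ} {α : Fin n → ℕ} {𝒜 : Set (Finset (Fin n))}

lemma expansion_injOn {S : Finset (Σ i : Fin n, Fin (α i))} (hS : S ∈ expansion α 𝒜) :
    Set.InjOn Sigma.fst (S : Set (Σ i : Fin n, Fin (α i))) :=
  Finset.card_image_iff.mp hS.2.symm

/-- Lift function sending `k` to a distinguished copy, with `i` sent to copy `a`. -/
def liftCopy (α : Fin n → ℕ) (hα : ∀ i, 0 < α i) (i : Fin n) (a : Fin (α i))
    (k : Fin n) : Σ j : Fin n, Fin (α j) :=
  if h : k = i then ⟨i, a⟩ else ⟨k, ⟨0, hα k⟩⟩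

lemma liftCopy_fst (hα : ∀ i, 0 < α i) (i : Fin n) (a : Fin (α i)) (k : Fin n) :
    (liftCopy α hα i a k).1 = k := by
  unfold liftCopy
  split
  · next h => exact h.symm
  · rfl

lemma liftCopy_image_fst (hα : ∀ i, 0 < α i) (i : Fin n) (a : Fin (α i)) (A : Finset (Fin n)) :
    (A.image (liftCopy α hα i a)).image Sigma.fst = A := by
  rw [Finset.image_image]
  have : ∀ k ∈ A, (Sigma.fst ∘ liftCopy α hα i a) k = id k := fun k _ => liftCopy_fst hα i a k
  rw [Finset.image_congr this, Finset.image_id]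

lemma liftCopy_injOn (hα : ∀ i, 0 < α i) (i : Fin n) (a : Fin (α i)) (A : Finset (Fin n)) :
    Set.InjOn (liftCopy α hα i a) A := by
  intro x _ y _ hxy
  have h := congrArg Sigma.fst hxy
  rwa [liftCopy_fst, liftCopy_fst] at h

lemma liftCopy_mem_expansion (hα : ∀ i, 0 < α i) (i : Fin n) (a : Fin (α i))
    {A : Finset (Fin n)} (hA : A ∈ 𝒜) :
    A.image (liftCopy α hα i a) ∈ expansion α 𝒜 := by
  have himg := liftCopy_image_fst hα i a A
  constructor
  · rw [himg]; exact hA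
  · rw [himg, Finset.card_image_of_injOn (liftCopy_injOn hα i a A)]

lemma liftCopy_self_mem (hα : ∀ i, 0 < α i) {i : Fin n} (a : Fin (α i))
    {A : Finset (Fin n)} (hi : i ∈ A) :
    (⟨i, a⟩ : Σ j : Fin n, Fin (α j)) ∈ A.image (liftCopy α hα i a) := by
  have : liftCopy α hα i a i = ⟨i, a⟩ := dif_pos rfl
  exact this ▸ Finset.mem_image_of_mem _ hi

/-- Lift sending each `k` to its first copy. -/
def lift0 (α : Fin n → ℕ) (hα : ∀ i, 0 < α i) (k : Fin n) : Σ j : Fin n, Fin (α j) :=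
  ⟨k, ⟨0, hα k⟩⟩

lemma lift0_image_fst (hα : ∀ i, 0 < α i) (A : Finset (Fin n)) :
    (A.image (lift0 α hα)).image Sigma.fst = A := by
  rw [Finset.image_image]
  exact Finset.image_id

lemma lift0_injOn (hα : ∀ i, 0 < α i) (A : Finset (Fin n)) :
    Set.InjOn (lift0 α hα) A := by
  intro x _ y _ hxy
  exact congrArg Sigma.fst hxy

lemma lift0_mem_expansion (hα : ∀ i, 0 < α i) {A : Finset (Fin n)} (hA : A ∈ 𝒜) :
    A.image (lift0 α hα) ∈ expansion α 𝒜 := by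
  constructor
  · rw [lift0_image_fst]; exact hA
  · rw [lift0_image_fst, Finset.card_image_of_injOn (lift0_injOn hα A)]

lemma link_expansion_mono (hα : ∀ i, 0 < α i) {i j : Fin n} {a : Fin (α i)} {b : Fin (α j)}
    (h : link 𝒜 i ⊆ link 𝒜 j) :
    link (expansion α 𝒜) ⟨i, a⟩ ⊆ link (expansion α 𝒜) ⟨j, b⟩ := by
  rintro C ⟨S, hS, huS, rfl⟩
  have hA : S.image Sigma.fst ∈ 𝒜 := hS.1
  set A := S.image Sigma.fst with hAdef
  have hiA : i ∈ A := Finset.mem_image_of_mem Sigma.fst huS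
  have hinj := expansion_injOn hS
  obtain ⟨B, hB, hjB, hEq⟩ := h (erase_mem_link hA hiA)
  -- hEq : A.erase i = B.erase j
  have hCimg : (S.erase ⟨i, a⟩).image Sigma.fst = A.erase i :=
    image_erase_of_injOn hinj huS
  have hjnot : j ∉ A.erase i := by rw [hEq]; exact Finset.notMem_erase j B
  have hjb_not : (⟨j, b⟩ : Σ k : Fin n, Fin (α k)) ∉ S.erase ⟨i, a⟩ := by
    intro hmem
    exact hjnot (hCimg ▸ Finset.mem_image_of_mem Sigma.fst hmem)
  refine ⟨insert ⟨j, b⟩ (S.erase ⟨i, a⟩), ⟨?_, ?_⟩, Finset.mem_insert_self _ _,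
    (Finset.erase_insert hjb_not).symm⟩
  · rw [Finset.image_insert, hCimg]
    have : insert j (A.erase i) = B := by rw [hEq, Finset.insert_erase hjB]
    rw [this]; exact hB
  · have h1 : (S.erase ⟨i, a⟩).card = S.card - 1 := Finset.card_erase_of_mem huS
    have h2 : (A.erase i).card = A.card - 1 := Finset.card_erase_of_mem hiA
    have h3 : 0 < S.card := Finset.card_pos.mpr ⟨_, huS⟩
    have h4 : S.card = A.card := hS.2
    rw [Finset.card_insert_of_notMem hjb_not, Finset.image_insert, hCimg,
      Finset.card_insert_of_notMem hjnot, h1, h2]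
    omega

lemma link_base_mono (hα : ∀ i, 0 < α i) {i j : Fin n} {a : Fin (α i)} {b : Fin (α j)}
    (h : link (expansion α 𝒜) ⟨i, a⟩ ⊆ link (expansion α 𝒜) ⟨j, b⟩) :
    link 𝒜 i ⊆ link 𝒜 j := by
  rintro C ⟨A, hA, hiA, rfl⟩
  set S := A.image (liftCopy α hα i a) with hSdef
  have hS : S ∈ expansion α 𝒜 := liftCopy_mem_expansion hα i a hA
  have hmem : (⟨i, a⟩ : Σ k : Fin n, Fin (α k)) ∈ S := liftCopy_self_mem hα a hiA
  obtain ⟨T, hT, hjT, hEq⟩ := h (erase_mem_link hS hmem)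
  -- hEq : S.erase ⟨i,a⟩ = T.erase ⟨j,b⟩
  refine ⟨T.image Sigma.fst, hT.1, Finset.mem_image_of_mem Sigma.fst hjT, ?_⟩
  have h1 : (T.erase ⟨j, b⟩).image Sigma.fst = (T.image Sigma.fst).erase j :=
    image_erase_of_injOn (expansion_injOn hT) hjT
  have h2 : (S.erase ⟨i, a⟩).image Sigma.fst = (S.image Sigma.fst).erase i :=
    image_erase_of_injOn (expansion_injOn hS) hmem
  rw [← h1, ← hEq, h2, liftCopy_image_fst]

lemma link_expansion_eq_iff (hα : ∀ i, 0 < α i) {i j : Fin n} (a : Fin (α i)) (b : Fin (α j)) :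
    link (expansion α 𝒜) ⟨i, a⟩ = link (expansion α 𝒜) ⟨j, b⟩ ↔ link 𝒜 i = link 𝒜 j := by
  constructor
  · intro h
    exact Set.Subset.antisymm (link_base_mono hα h.subset) (link_base_mono hα h.superset)
  · intro h
    exact Set.Subset.antisymm (link_expansion_mono hα h.subset) (link_expansion_mono hα h.superset)

end Expansion

/-- the contraction of the expansion `M^α` coincides with the
contraction of `M` (up to relabeling), and the contraction of a matroid is a
matroid. -/
theorem stmt_12 {n : ℕ} (α : Fin n → ℕ) (hα : ∀ i, 0 < α i)
    (𝒜 : Set (Finset (Fin n))) (hM : IsMatroidBases 𝒜) :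
    ∃ (m : ℕ) (q : Fin n → Fin m) (q' : (Σ i : Fin n, Fin (α i)) → Fin m),
      Function.Surjective q ∧ Function.Surjective q' ∧
      (∀ x y : Fin n, q x = q y ↔ link 𝒜 x = link 𝒜 y) ∧
      (∀ u v : (Σ i : Fin n, Fin (α i)),
        q' u = q' v ↔ link (expansion α 𝒜) u = link (expansion α 𝒜) v) ∧
      (fun A : Finset (Fin n) => A.image q) '' 𝒜
        = (fun S : Finset (Σ i : Fin n, Fin (α i)) => S.image q') '' (expansion α 𝒜) ∧
      IsMatroidBases ((fun A : Finset (Fin n) => A.image q) '' 𝒜) := by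
  classical
  set r : Setoid (Fin n) := ⟨fun x y => link 𝒜 x = link 𝒜 y,
    ⟨fun _ => rfl, Eq.symm, Eq.trans⟩⟩ with hr
  let e : Quotient r ≃ Fin (Fintype.card (Quotient r)) := Fintype.equivFin (Quotient r)
  set q : Fin n → Fin (Fintype.card (Quotient r)) := fun x => e (Quotient.mk r x) with hq
  set q' : (Σ i : Fin n, Fin (α i)) → Fin (Fintype.card (Quotient r)) :=
    fun u => q u.1 with hq'
  -- key iff for q
  have hqiff : ∀ x y : Fin n, q x = q y ↔ link 𝒜 x = link 𝒜 y := by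
    intro x y
    constructor
    · intro h
      exact Quotient.exact (e.injective h)
    · intro h
      exact congrArg e (Quotient.sound h)
  have hqsurj : Function.Surjective q := by
    intro z
    obtain ⟨x, hx⟩ := Quotient.exists_rep (e.symm z)
    exact ⟨x, by simp [hq, hx]⟩
  -- q is injective on members of 𝒜
  have hqinj : ∀ B ∈ 𝒜, Set.InjOn q (B : Set (Fin n)) := by
    intro B hB x hx y hy hxy
    exact eq_of_mem_of_link_eq hB hx hy ((hqiff x y).mp hxy)
  have hcardeq := card_eq_of_isMatroidBases hM
  obtain ⟨hne, hanti, hexch⟩ := hM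
  refine ⟨Fintype.card (Quotient r), q, q', hqsurj, ?_, hqiff, ?_, ?_, ?_, ?_, ?_⟩
  · -- q' surjective
    intro z
    obtain ⟨x, hx⟩ := hqsurj z
    exact ⟨⟨x, ⟨0, hα x⟩⟩, hx⟩
  · -- q' iff
    rintro ⟨i, a⟩ ⟨j, b⟩
    rw [link_expansion_eq_iff hα a b]
    exact hqiff i j
  · -- image equality
    ext Z
    constructor
    · rintro ⟨A, hA, rfl⟩
      refine ⟨A.image (lift0 α hα), lift0_mem_expansion hα hA, ?_⟩
      simp only [Finset.image_image]
      rfl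
    · rintro ⟨S, hS, rfl⟩
      refine ⟨S.image Sigma.fst, hS.1, ?_⟩
      simp only [Finset.image_image]
      rfl
  · -- nonempty
    obtain ⟨A, hA⟩ := hne
    exact ⟨A.image q, A, hA, rfl⟩
  · -- antichain
    rintro Z₁ ⟨B₁, hB₁, rfl⟩ Z₂ ⟨B₂, hB₂, rfl⟩ hsub
    have h1 : (B₁.image q).card = B₁.card := Finset.card_image_of_injOn (hqinj B₁ hB₁)
    have h2 : (B₂.image q).card = B₂.card := Finset.card_image_of_injOn (hqinj B₂ hB₂)
    exact Finset.eq_of_subset_of_card_le hsub (by rw [h1, h2, hcardeq B₁ hB₁ B₂ hB₂])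
  · -- exchange
    rintro Z₁ ⟨B₁, hB₁, rfl⟩ Z₂ ⟨B₂, hB₂, rfl⟩ w hw
    rw [Finset.mem_sdiff] at hw
    obtain ⟨x, hxB₁, rfl⟩ := Finset.mem_image.mp hw.1
    have hxB₂ : x ∉ B₂ := fun h => hw.2 (Finset.mem_image_of_mem q h)
    obtain ⟨y, hy, hB'⟩ := hexch B₁ hB₁ B₂ hB₂ x (Finset.mem_sdiff.mpr ⟨hxB₁, hxB₂⟩)
    rw [Finset.mem_sdiff] at hy
    have hqy_not : q y ∉ B₁.image q := by
      intro hmem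
      obtain ⟨z, hzB₁, hz⟩ := Finset.mem_image.mp hmem
      have hlk : link 𝒜 z = link 𝒜 y := (hqiff z y).mp hz
      by_cases hzx : z = x
      · refine hw.2 ?_
        show q x ∈ B₂.image q
        rw [← hzx, hz]
        exact Finset.mem_image_of_mem q hy.1
      · have hzB' : z ∈ insert y (B₁.erase x) :=
          Finset.mem_insert_of_mem (Finset.mem_erase.mpr ⟨hzx, hzB₁⟩)
        have : z = y := eq_of_mem_of_link_eq hB' hzB' (Finset.mem_insert_self y _) hlk
        exact hy.2 (this ▸ hzB₁)
    refine ⟨q y, Finset.mem_sdiff.mpr ⟨Finset.mem_image_of_mem q hy.1, hqy_not⟩,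
      insert y (B₁.erase x), hB', ?_⟩
    show (insert y (B₁.erase x)).image q = insert (q y) ((B₁.image q).erase (q x))
    rw [Finset.image_insert, image_erase_of_injOn (hqinj B₁ hB₁) hxB₁]
end

section
/- Let M be a matroid on {x_1,...,x_n} and α ∈ ℕ^n with positive entries. If (B'_1, B'_2) is obtained from a pair of bases (A'_1, A'_2) of M^α by a symmetric subset exchange, then either π(B'_i) = π(A'_i) for i = 1,2, or (π(B'_1), π(B'_2)) is obtained from (π(A'_1), π(A'_2)) by a symmetric subset exchange in M. -/
open Finset

/-- `(B₁, B₂)` is obtained from `(A₁, A₂)` by a symmetric subset exchange in the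
matroid with basis family `ℬ`. -/
def SymSubsetExch {γ : Type*} [DecidableEq γ] (ℬ : Set (Finset γ))
    (A₁ A₂ B₁ B₂ : Finset γ) : Prop :=
  ∃ U V : Finset γ, U ⊆ A₁ ∧ V ⊆ A₂ ∧
    B₁ = (A₁ \ U) ∪ V ∧ B₂ = (A₂ \ V) ∪ U ∧ B₁ ∈ ℬ ∧ B₂ ∈ ℬ


lemma image_sdiff_of_injOn {γ δ : Type*} [DecidableEq γ] [DecidableEq δ]
    (f : γ → δ) (A U : Finset γ) (hU : U ⊆ A) (h : Set.InjOn f A) :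
    (A \ U).image f = A.image f \ U.image f := by
  ext y
  simp only [Finset.mem_image, Finset.mem_sdiff]
  constructor
  · rintro ⟨x, ⟨hxA, hxU⟩, rfl⟩
    refine ⟨⟨x, hxA, rfl⟩, ?_⟩
    rintro ⟨z, hzU, hz⟩
    exact hxU (h (hU hzU) hxA hz ▸ hzU)
  · rintro ⟨⟨x, hxA, rfl⟩, hy⟩
    exact ⟨x, ⟨hxA, fun hxU => hy ⟨x, hxU, rfl⟩⟩, rfl⟩

/-- if `(B'₁, B'₂)` is obtained from a pair of bases of `M^α` by a
symmetric subset exchange, then either the projections are unchanged, or the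
projected pair is obtained from the projected pair by a symmetric subset
exchange in `M`. -/
theorem stmt_16 {n : ℕ} (α : Fin n → ℕ) (hα : ∀ i, 0 < α i)
    (𝒜 : Set (Finset (Fin n))) (hM : IsMatroidBases 𝒜)
    (A'₁ A'₂ B'₁ B'₂ : Finset (Σ i : Fin n, Fin (α i)))
    (hA1 : A'₁ ∈ expansion α 𝒜) (hA2 : A'₂ ∈ expansion α 𝒜)
    (hex : SymSubsetExch (expansion α 𝒜) A'₁ A'₂ B'₁ B'₂) :
    (B'₁.image Sigma.fst = A'₁.image Sigma.fst ∧
     B'₂.image Sigma.fst = A'₂.image Sigma.fst) ∨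
    SymSubsetExch 𝒜 (A'₁.image Sigma.fst) (A'₂.image Sigma.fst)
      (B'₁.image Sigma.fst) (B'₂.image Sigma.fst) := by
  obtain ⟨U, V, hU, hV, hB1, hB2, hB1m, hB2m⟩ := hex
  have hi1 : Set.InjOn Sigma.fst (A'₁ : Set (Σ i : Fin n, Fin (α i))) :=
    Finset.card_image_iff.mp hA1.2.symm
  have hi2 : Set.InjOn Sigma.fst (A'₂ : Set (Σ i : Fin n, Fin (α i))) :=
    Finset.card_image_iff.mp hA2.2.symm
  refine Or.inr ⟨U.image Sigma.fst, V.image Sigma.fst,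
    Finset.image_subset_image hU, Finset.image_subset_image hV, ?_, ?_, hB1m.1, hB2m.1⟩
  · rw [hB1, Finset.image_union, image_sdiff_of_injOn _ _ _ hU hi1]
  · rw [hB2, Finset.image_union, image_sdiff_of_injOn _ _ _ hV hi2]
end
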